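/- Let V ≥ 0 satisfy e^{2V} − 1 ≤ 1/2, let μ > 0, and let m : ℝ³ → ℝ³ be a map such that for all y ≠ 0: (i) e^{-V}|y| ≤ |m(y)| ≤ e^{V}|y| and e^{-V}|y| ≤ |m(−y)| ≤ e^{V}|y|; (ii) e^{-V}|y|_{1/F} ≤ |m(±y)|_{1/F} ≤ e^{V}|y|_{1/F}; (iii) |m(−y) − y| ≤ e^{2V}(e^{2V} − 1)|y| and |m(y) + y| ≤ e^{2V}(e^{2V} − 1)|y|; (iv) |m(−y) + m(y)| ≤ e^{2V}(e^{2V} − 1) min(1, μ|y|) |y|; (v) | |m(−y)|_{1/F} − |m(y)|_{1/F} | ≤ e^{2V}(e^{2V} − 1) min(1, μ|y|) |y|_{1/F}. Then there exists a constant C_F depending only on F such that for all y ≠ 0: |K₀(y) − K₀(m(−y))| ≤ (C_F/|y|⁴) e^{6V}(e^{2V} − 1), and |K₀(m(y)) − K₀(m(−y))| ≤ (C_F/|y|⁴) e^{6V}(e^{2V} − 1) min(1, μ|y|). -/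

import Mathlib

open scoped Real

noncomputable section

/-- `|x|_{1/F}² = x₁² + x₂² + x₃²/F²`. -/
def normInvFsq (F : ℝ) (x : EuclideanSpace ℝ (Fin 3)) : ℝ :=
  x 0 ^ 2 + x 1 ^ 2 + x 2 ^ 2 / F ^ 2

/-- `|x|_{1/F} = √(x₁² + x₂² + x₃²/F²)`. -/
def normInvF (F : ℝ) (x : EuclideanSpace ℝ (Fin 3)) : ℝ :=
  Real.sqrt (normInvFsq F x)

/-- The kernel `K₀(y) = −(2/F²)(y₁² + y₂² − 3y₃²/F²)/|y|_{1/F}⁶`. -/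
def K₀ (F : ℝ) (y : EuclideanSpace ℝ (Fin 3)) : ℝ :=
  -(2 / F ^ 2) * (y 0 ^ 2 + y 1 ^ 2 - 3 * y 2 ^ 2 / F ^ 2) / (normInvFsq F y) ^ 3

/-! Write `K₀ = g / N³` with `g` and `N = |·|²_{1/F}` diagonal quadratic forms. A difference of
diagonal quadratic forms is bounded by `‖a - b‖ (‖a‖ + ‖b‖)`, and `‖x‖² ≤ N(x) ≤ ‖x‖²/F²`, so on the
shell `‖x‖² ∈ [2t²/3, 3t²/2]` the kernel is Lipschitz with constant `C_F / t⁵`. Since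
`e^{2V} ≤ 3/2`, hypothesis (i) puts `y`, `m(-y)` and `-m(y)` in that shell for `t = ‖y‖`; the two
estimates then come from (iii) and (iv), the second after writing `K₀(m y) = K₀(-m y)`. -/

open Set

section DiagonalQuadraticForm

variable {ι : Type*} [Fintype ι]

def diagQuad (c : ι → ℝ) (x : EuclideanSpace ℝ ι) : ℝ :=
  ∑ i, c i * x i ^ 2

theorem abs_apply_sq_sub_apply_sq_le (a b : EuclideanSpace ℝ ι) (i : ι) :
    |a i ^ 2 - b i ^ 2| ≤ ‖a - b‖ * (‖a‖ + ‖b‖) := by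
  have hsub : |a i - b i| ≤ ‖a - b‖ := by simpa using PiLp.norm_apply_le (a - b) i
  have hadd : |a i + b i| ≤ ‖a‖ + ‖b‖ :=
    (abs_add_le _ _).trans (add_le_add (PiLp.norm_apply_le a i) (PiLp.norm_apply_le b i))
  rw [show a i ^ 2 - b i ^ 2 = (a i - b i) * (a i + b i) by ring, abs_mul]
  exact mul_le_mul hsub hadd (abs_nonneg _) (norm_nonneg _)

theorem abs_diagQuad_sub_le (c : ι → ℝ) (a b : EuclideanSpace ℝ ι) :
    |diagQuad c a - diagQuad c b| ≤ (∑ i, |c i|) * (‖a - b‖ * (‖a‖ + ‖b‖)) := by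
  rw [diagQuad, diagQuad, ← Finset.sum_sub_distrib, Finset.sum_mul]
  refine (Finset.abs_sum_le_sum_abs _ _).trans (Finset.sum_le_sum fun i _ => ?_)
  rw [← mul_sub, abs_mul]
  exact mul_le_mul_of_nonneg_left (abs_apply_sq_sub_apply_sq_le a b i) (abs_nonneg _)

theorem abs_diagQuad_le (c : ι → ℝ) (x : EuclideanSpace ℝ ι) :
    |diagQuad c x| ≤ (∑ i, |c i|) * ‖x‖ ^ 2 := by
  simpa [diagQuad, sq] using abs_diagQuad_sub_le c x 0

end DiagonalQuadraticForm

theorem abs_div_cube_sub_div_cube_le {p q A B s S : ℝ} (hs : 0 < s)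
    (hA : A ∈ Icc s S) (hB : B ∈ Icc s S) :
    |p / A ^ 3 - q / B ^ 3| ≤ |p - q| / s ^ 3 + 3 * S ^ 2 * |q| * |A - B| / s ^ 6 := by
  obtain ⟨hsA, hAS⟩ := hA
  obtain ⟨hsB, hBS⟩ := hB
  have hA0 : 0 < A := hs.trans_le hsA
  have hB0 : 0 < B := hs.trans_le hsB
  have hsplit : p / A ^ 3 - q / B ^ 3
      = (p - q) / A ^ 3 + q * ((B - A) * (B ^ 2 + B * A + A ^ 2)) / (A ^ 3 * B ^ 3) := by
    field_simp
    ring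
  have hcube : s ^ 3 ≤ A ^ 3 := pow_le_pow_left₀ hs.le hsA 3
  have hsix : s ^ 6 ≤ A ^ 3 * B ^ 3 := by
    rw [show s ^ 6 = s ^ 3 * s ^ 3 by ring]
    exact mul_le_mul hcube (pow_le_pow_left₀ hs.le hsB 3) (by positivity) (by positivity)
  have hquad : |B ^ 2 + B * A + A ^ 2| ≤ 3 * S ^ 2 := by
    rw [abs_of_pos (by positivity)]
    nlinarith [mul_le_mul hBS hAS hA0.le (hs.le.trans (hsA.trans hAS))]
  rw [hsplit]
  refine (abs_add_le _ _).trans (add_le_add ?_ ?_)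
  · rw [abs_div, abs_of_pos (pow_pos hA0 3)]
    exact div_le_div_of_nonneg_left (abs_nonneg _) (by positivity) hcube
  · rw [abs_div, abs_of_pos (mul_pos (pow_pos hA0 3) (pow_pos hB0 3)), abs_mul, abs_mul,
      abs_sub_comm B]
    refine div_le_div₀ (by positivity) ?_ (by positivity) hsix
    calc |q| * (|A - B| * |B ^ 2 + B * A + A ^ 2|) ≤ |q| * (|A - B| * (3 * S ^ 2)) := by
          gcongr
      _ = 3 * S ^ 2 * |q| * |A - B| := by ring

theorem sq_mem_Icc_of_exp_bounds {V t r : ℝ} (hV : Real.exp (2 * V) ≤ 3 / 2) (ht : 0 ≤ t)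
    (hlo : Real.exp (-V) * t ≤ r) (hhi : r ≤ Real.exp V * t) :
    r ^ 2 ∈ Icc (2 / 3 * t ^ 2) (3 / 2 * t ^ 2) := by
  have hexp_neg : Real.exp (-V) ^ 2 * Real.exp (2 * V) = 1 := by
    rw [← Real.exp_nat_mul, ← Real.exp_add]; norm_num
  have hexp : Real.exp V ^ 2 = Real.exp (2 * V) := by
    rw [← Real.exp_nat_mul]; norm_num
  have hr : 0 ≤ r := (by positivity : 0 ≤ Real.exp (-V) * t).trans hlo
  have hlo' : 2 / 3 ≤ Real.exp (-V) ^ 2 := by nlinarith [sq_nonneg (Real.exp (-V))]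
  constructor
  · calc 2 / 3 * t ^ 2 ≤ (Real.exp (-V) * t) ^ 2 := by rw [mul_pow]; gcongr
      _ ≤ r ^ 2 := by gcongr
  · calc r ^ 2 ≤ (Real.exp V * t) ^ 2 := by gcongr
      _ ≤ 3 / 2 * t ^ 2 := by rw [mul_pow, hexp]; gcongr

section Kernel

theorem normInvFsq_eq_diagQuad (F : ℝ) (x : EuclideanSpace ℝ (Fin 3)) :
    normInvFsq F x = diagQuad ![1, 1, 1 / F ^ 2] x := by
  simp only [normInvFsq, diagQuad, Fin.sum_univ_three, Matrix.cons_val_zero, Matrix.cons_val_one,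
    Matrix.cons_val]
  ring

theorem K₀_eq_diagQuad_div (F : ℝ) (x : EuclideanSpace ℝ (Fin 3)) :
    K₀ F x = diagQuad ![-2 / F ^ 2, -2 / F ^ 2, 6 / F ^ 4] x / normInvFsq F x ^ 3 := by
  simp only [K₀, diagQuad, Fin.sum_univ_three, Matrix.cons_val_zero, Matrix.cons_val_one,
    Matrix.cons_val]
  ring

theorem K₀_neg (F : ℝ) (x : EuclideanSpace ℝ (Fin 3)) : K₀ F (-x) = K₀ F x := by
  simp [K₀, normInvFsq]

variable {F : ℝ}

theorem sq_norm_le_normInvFsq (hF0 : 0 < F) (hF1 : F ≤ 1) (x : EuclideanSpace ℝ (Fin 3)) :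
    ‖x‖ ^ 2 ≤ normInvFsq F x := by
  have h : x 2 ^ 2 ≤ x 2 ^ 2 / F ^ 2 :=
    le_div_self (sq_nonneg _) (by positivity) (pow_le_one₀ hF0.le hF1)
  rw [EuclideanSpace.real_norm_sq_eq, Fin.sum_univ_three, normInvFsq]
  linarith

theorem normInvFsq_le_sq_norm_div (hF0 : 0 < F) (hF1 : F ≤ 1) (x : EuclideanSpace ℝ (Fin 3)) :
    normInvFsq F x ≤ ‖x‖ ^ 2 / F ^ 2 := by
  have h : ∀ u : ℝ, u ^ 2 ≤ u ^ 2 / F ^ 2 := fun u =>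
    le_div_self (sq_nonneg _) (by positivity) (pow_le_one₀ hF0.le hF1)
  rw [EuclideanSpace.real_norm_sq_eq, Fin.sum_univ_three, normInvFsq, add_div, add_div]
  linarith [h (x 0), h (x 1)]

theorem sum_abs_normInvFsq_coeff_le (hF0 : 0 < F) (hF1 : F ≤ 1) :
    ∑ i, |(![1, 1, 1 / F ^ 2] : Fin 3 → ℝ) i| ≤ 3 / F ^ 2 := by
  have h : 1 ≤ 1 / F ^ 2 := one_le_one_div (by positivity) (pow_le_one₀ hF0.le hF1)
  simp only [Fin.sum_univ_three, Matrix.cons_val_zero, Matrix.cons_val_one, Matrix.cons_val_two,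
    Matrix.head_cons, Matrix.tail_cons, abs_one, abs_of_pos (one_div_pos.2 (pow_pos hF0 2))]
  linarith [show 3 / F ^ 2 = 3 * (1 / F ^ 2) by ring]

theorem sum_abs_K₀_coeff_le (hF0 : 0 < F) (hF1 : F ≤ 1) :
    ∑ i, |(![-2 / F ^ 2, -2 / F ^ 2, 6 / F ^ 4] : Fin 3 → ℝ) i| ≤ 10 / F ^ 4 := by
  have h : 1 / F ^ 2 ≤ 1 / F ^ 4 :=
    one_div_le_one_div_of_le (by positivity) (pow_le_pow_of_le_one hF0.le hF1 (by norm_num))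
  simp only [Fin.sum_univ_three, Matrix.cons_val_zero, Matrix.cons_val_one, Matrix.cons_val_two,
    Matrix.head_cons, Matrix.tail_cons, abs_div, abs_neg, abs_two, abs_pow, abs_of_pos hF0,
    abs_of_pos (show (0 : ℝ) < 6 by norm_num)]
  linarith [show 2 / F ^ 2 = 2 * (1 / F ^ 2) by ring, show 6 / F ^ 4 = 6 * (1 / F ^ 4) by ring,
    show 10 / F ^ 4 = 10 * (1 / F ^ 4) by ring]

theorem normInvFsq_mem_Icc (hF0 : 0 < F) (hF1 : F ≤ 1) {t : ℝ} {x : EuclideanSpace ℝ (Fin 3)}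
    (hx : ‖x‖ ^ 2 ∈ Icc (2 / 3 * t ^ 2) (3 / 2 * t ^ 2)) :
    normInvFsq F x ∈ Icc (2 / 3 * t ^ 2) (3 / 2 * t ^ 2 / F ^ 2) :=
  ⟨hx.1.trans (sq_norm_le_normInvFsq hF0 hF1 x),
    (normInvFsq_le_sq_norm_div hF0 hF1 x).trans (by gcongr; exact hx.2)⟩

theorem abs_K₀_sub_le (hF0 : 0 < F) (hF1 : F ≤ 1) {t : ℝ} (ht : 0 < t)
    {a b : EuclideanSpace ℝ (Fin 3)} (ha : ‖a‖ ^ 2 ∈ Icc (2 / 3 * t ^ 2) (3 / 2 * t ^ 2))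
    (hb : ‖b‖ ^ 2 ∈ Icc (2 / 3 * t ^ 2) (3 / 2 * t ^ 2)) :
    |K₀ F a - K₀ F b| ≤ 10 ^ 4 / F ^ 10 * ‖a - b‖ / t ^ 5 := by
  set c : Fin 3 → ℝ := ![-2 / F ^ 2, -2 / F ^ 2, 6 / F ^ 4]
  set D := ‖a - b‖
  have hle : ∀ x : EuclideanSpace ℝ (Fin 3), ‖x‖ ^ 2 ≤ 3 / 2 * t ^ 2 → ‖x‖ ≤ 5 / 4 * t :=
    fun x hx => by nlinarith [norm_nonneg x]
  have hsum : ‖a‖ + ‖b‖ ≤ 5 / 2 * t := by linarith [hle a ha.2, hle b hb.2]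
  have hP : D * (‖a‖ + ‖b‖) ≤ D * (5 / 2 * t) := mul_le_mul_of_nonneg_left hsum (norm_nonneg _)
  have hnum : |diagQuad c a - diagQuad c b| ≤ 10 / F ^ 4 * (D * (5 / 2 * t)) :=
    (abs_diagQuad_sub_le c a b).trans
      (mul_le_mul (sum_abs_K₀_coeff_le hF0 hF1) hP (by positivity) (by positivity))
  have hnumb : |diagQuad c b| ≤ 10 / F ^ 4 * (3 / 2 * t ^ 2) :=
    (abs_diagQuad_le c b).trans
      (mul_le_mul (sum_abs_K₀_coeff_le hF0 hF1) hb.2 (sq_nonneg _) (by positivity))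
  have hden : |normInvFsq F a - normInvFsq F b| ≤ 3 / F ^ 2 * (D * (5 / 2 * t)) := by
    rw [normInvFsq_eq_diagQuad, normInvFsq_eq_diagQuad]
    exact (abs_diagQuad_sub_le _ a b).trans
      (mul_le_mul (sum_abs_normInvFsq_coeff_le hF0 hF1) hP (by positivity) (by positivity))
  rw [K₀_eq_diagQuad_div, K₀_eq_diagQuad_div]
  refine (abs_div_cube_sub_div_cube_le (by positivity) (normInvFsq_mem_Icc hF0 hF1 ha)
    (normInvFsq_mem_Icc hF0 hF1 hb)).trans ?_
  have hF6 : F ^ 6 ≤ 1 := pow_le_one₀ hF0.le hF1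
  calc _ ≤ 10 / F ^ 4 * (D * (5 / 2 * t)) / (2 / 3 * t ^ 2) ^ 3
        + 3 * (3 / 2 * t ^ 2 / F ^ 2) ^ 2 * (10 / F ^ 4 * (3 / 2 * t ^ 2))
          * (3 / F ^ 2 * (D * (5 / 2 * t))) / (2 / 3 * t ^ 2) ^ 6 := by
        gcongr
    _ = (675 / 8 * F ^ 6 + 4428675 / 512) / F ^ 10 * D / t ^ 5 := by
        field_simp
        ring
    _ ≤ 10 ^ 4 / F ^ 10 * D / t ^ 5 := by
        gcongr
        linarith

/-- Kernel difference estimates (Proposition 6.3): under the displacement estimates (i)–(v)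
for `m`, one has `|K₀(y) − K₀(m(−y))| ≤ (C_F/|y|⁴) e^{6V}(e^{2V} − 1)` and
`|K₀(m(y)) − K₀(m(−y))| ≤ (C_F/|y|⁴) e^{6V}(e^{2V} − 1) min(1, μ|y|)`. -/
theorem kernel_difference_estimates
    (F : ℝ) (hF : F ∈ Set.Ioc (0 : ℝ) 1) :
    ∃ C > (0 : ℝ), ∀ (V μ : ℝ), 0 ≤ V → Real.exp (2 * V) - 1 ≤ 1 / 2 → 0 < μ →
      ∀ m : EuclideanSpace ℝ (Fin 3) → EuclideanSpace ℝ (Fin 3),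
        (∀ y : EuclideanSpace ℝ (Fin 3), y ≠ 0 →
          (Real.exp (-V) * ‖y‖ ≤ ‖m y‖ ∧ ‖m y‖ ≤ Real.exp V * ‖y‖) ∧
          (Real.exp (-V) * ‖y‖ ≤ ‖m (-y)‖ ∧ ‖m (-y)‖ ≤ Real.exp V * ‖y‖)) →
        (∀ y : EuclideanSpace ℝ (Fin 3), y ≠ 0 →
          (Real.exp (-V) * normInvF F y ≤ normInvF F (m y) ∧
            normInvF F (m y) ≤ Real.exp V * normInvF F y) ∧
          (Real.exp (-V) * normInvF F y ≤ normInvF F (m (-y)) ∧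
            normInvF F (m (-y)) ≤ Real.exp V * normInvF F y)) →
        (∀ y : EuclideanSpace ℝ (Fin 3), y ≠ 0 →
          ‖m (-y) - y‖ ≤ Real.exp (2 * V) * (Real.exp (2 * V) - 1) * ‖y‖ ∧
          ‖m y + y‖ ≤ Real.exp (2 * V) * (Real.exp (2 * V) - 1) * ‖y‖) →
        (∀ y : EuclideanSpace ℝ (Fin 3), y ≠ 0 →
          ‖m (-y) + m y‖ ≤
            Real.exp (2 * V) * (Real.exp (2 * V) - 1) * min 1 (μ * ‖y‖) * ‖y‖) →
        (∀ y : EuclideanSpace ℝ (Fin 3), y ≠ 0 →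
          |normInvF F (m (-y)) - normInvF F (m y)| ≤
            Real.exp (2 * V) * (Real.exp (2 * V) - 1) * min 1 (μ * ‖y‖) * normInvF F y) →
        ∀ y : EuclideanSpace ℝ (Fin 3), y ≠ 0 →
          |K₀ F y - K₀ F (m (-y))| ≤
            (C / ‖y‖ ^ 4) * Real.exp (6 * V) * (Real.exp (2 * V) - 1) ∧
          |K₀ F (m y) - K₀ F (m (-y))| ≤
            (C / ‖y‖ ^ 4) * Real.exp (6 * V) * (Real.exp (2 * V) - 1) * min 1 (μ * ‖y‖) := by
  obtain ⟨hF0, hF1⟩ := hF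
  refine ⟨10 ^ 4 / F ^ 10, by positivity, ?_⟩
  intro V μ hV hVe hμ m hnorm _ hdisp hodd _ y hy
  have ht : 0 < ‖y‖ := norm_pos_iff.mpr hy
  have hexp : Real.exp (2 * V) ≤ 3 / 2 := by linarith
  have hexp_mono : Real.exp (2 * V) ≤ Real.exp (6 * V) := Real.exp_le_exp.mpr (by linarith)
  have hε : 0 ≤ Real.exp (2 * V) - 1 := by linarith [Real.one_le_exp (by linarith : 0 ≤ 2 * V)]
  have hmin : 0 ≤ min 1 (μ * ‖y‖) := le_min zero_le_one (by positivity)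
  obtain ⟨⟨hmy_lo, hmy_hi⟩, hmny_lo, hmny_hi⟩ := hnorm y hy
  have hy_sq : ‖y‖ ^ 2 ∈ Icc (2 / 3 * ‖y‖ ^ 2) (3 / 2 * ‖y‖ ^ 2) := by
    constructor <;> nlinarith [sq_nonneg ‖y‖]
  have hmny_sq := sq_mem_Icc_of_exp_bounds hexp ht.le hmny_lo hmny_hi
  have hmy_sq : ‖-m y‖ ^ 2 ∈ Icc (2 / 3 * ‖y‖ ^ 2) (3 / 2 * ‖y‖ ^ 2) := by
    rw [norm_neg]; exact sq_mem_Icc_of_exp_bounds hexp ht.le hmy_lo hmy_hi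
  have hlip : ∀ a : EuclideanSpace ℝ (Fin 3),
      ‖a‖ ^ 2 ∈ Icc (2 / 3 * ‖y‖ ^ 2) (3 / 2 * ‖y‖ ^ 2) → ∀ k, ‖a - m (-y)‖ ≤ k * ‖y‖ →
        |K₀ F a - K₀ F (m (-y))| ≤ 10 ^ 4 / F ^ 10 / ‖y‖ ^ 4 * k :=
    fun a ha k hk => calc
      _ ≤ 10 ^ 4 / F ^ 10 * ‖a - m (-y)‖ / ‖y‖ ^ 5 := abs_K₀_sub_le hF0 hF1 ht ha hmny_sq
      _ ≤ 10 ^ 4 / F ^ 10 * (k * ‖y‖) / ‖y‖ ^ 5 := by gcongr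
      _ = 10 ^ 4 / F ^ 10 / ‖y‖ ^ 4 * k := by field_simp
  constructor
  · calc _ ≤ 10 ^ 4 / F ^ 10 / ‖y‖ ^ 4 * (Real.exp (2 * V) * (Real.exp (2 * V) - 1)) :=
          hlip y hy_sq _ (by rw [norm_sub_rev]; exact (hdisp y hy).1)
      _ ≤ _ := by rw [← mul_assoc]; gcongr
  · rw [← K₀_neg F (m y)]
    calc _ ≤ 10 ^ 4 / F ^ 10 / ‖y‖ ^ 4 *
          (Real.exp (2 * V) * (Real.exp (2 * V) - 1) * min 1 (μ * ‖y‖)) :=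
          hlip _ hmy_sq _ (by rw [← norm_neg, neg_sub, sub_neg_eq_add]; exact hodd y hy)
      _ ≤ _ := by simp only [← mul_assoc]; gcongr
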